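/- For compensable processes PP and QQ: (PP ∥ QQ) —t→ R if and only if there exist standard processes P, Q and traces p, q such that t ∈ p ∥ q (interleaving with terminal synchronization), PP —p→ P, QQ —q→ Q, and R = P ∥ Q. -/
import Mathlib


namespace CCSP

/-- Terminal events Ω = {✓, !, ?}. -/
inductive Omega : Type
  | tick | bang | quest
deriving DecidableEq

/-- Events: normal events from Σ or terminal events from Ω. -/
inductive Ev (σ : Type) : Type
  | norm (a : σ)
  | term (ω : Omega)

/-- Standard cCSP process terms (with the null process 0). -/
inductive Proc (σ : Type) : Type
  | zero
  | atom (a : σ)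
  | skip
  | throw
  | yield
  | seq (P Q : Proc σ)
  | choice (P Q : Proc σ)
  | par (P Q : Proc σ)

open Proc Ev Omega

/-- Synchronisation of terminal events: ω ∈ ω₁ & ω₂. -/
inductive Sync : Omega → Omega → Omega → Prop
  | tick : Sync .tick .tick .tick
  | bangL (ω : Omega) : Sync .bang ω .bang
  | bangR (ω : Omega) : Sync ω .bang .bang
  | quest : Sync .quest .quest .quest
  | questTick : Sync .quest .tick .tick
  | tickQuest : Sync .tick .quest .tick

variable {σ : Type}

/-- Labelled transition system for standard processes. -/
inductive Step : Proc σ → Ev σ → Proc σ → Prop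
  | atom (a : σ) : Step (atom a) (norm a) skip
  | skip : Step skip (term .tick) zero
  | throw : Step throw (term .bang) zero
  | yieldQ : Step yield (term .quest) zero
  | yieldT : Step yield (term .tick) zero
  | seqN {P P' Q : Proc σ} {a : σ} :
      Step P (norm a) P' → Step (seq P Q) (norm a) (seq P' Q)
  | seqT {P Q R : Proc σ} {e : Ev σ} :
      Step P (term .tick) zero → Step Q e R → Step (seq P Q) e R
  | seqA {P Q : Proc σ} {ω : Omega} :
      Step P (term ω) zero → ω ≠ .tick → Step (seq P Q) (term ω) zero
  | chL {P Q R : Proc σ} {e : Ev σ} : Step P e R → Step (choice P Q) e R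
  | chR {P Q R : Proc σ} {e : Ev σ} : Step Q e R → Step (choice P Q) e R
  | parL {P P' Q : Proc σ} {a : σ} :
      Step P (norm a) P' → Step (par P Q) (norm a) (par P' Q)
  | parR {P Q Q' : Proc σ} {a : σ} :
      Step Q (norm a) Q' → Step (par P Q) (norm a) (par P Q')
  | parT {P Q : Proc σ} {ω₁ ω₂ ω : Omega} :
      Step P (term ω₁) zero → Step Q (term ω₂) zero → Sync ω₁ ω₂ ω →
      Step (par P Q) (term ω) zero

/-- A complete trace: a sequence of normal events followed by one terminal event. -/
abbrev Trace (σ : Type) := List σ × Omega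

/-- Lifted transition relation over sequences of normal events ending in ω. -/
def Lift : Proc σ → List σ → Omega → Proc σ → Prop
  | P, [], ω, Q => Step P (term ω) Q
  | P, a :: t, ω, Q => ∃ P', Step P (norm a) P' ∧ Lift P' t ω Q

/-- Lifted transition relation over complete traces. -/
def LiftT (P : Proc σ) (t : Trace σ) (Q : Proc σ) : Prop := Lift P t.1 t.2 Q

/-- Derived traces: DT(P) = {t | P —t→ 0}. -/
def DT (P : Proc σ) : Set (Trace σ) := {t | LiftT P t zero}

/-- Trace sequential composition: p ; q. -/
def tseq (p q : Trace σ) : Trace σ :=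
  if p.2 = Omega.tick then (p.1 ++ q.1, q.2) else p

/-- Prefixing a normal event to a trace. -/
def tcons (a : σ) (p : Trace σ) : Trace σ := (a :: p.1, p.2)

/-- Interleaving of finite sequences: `Inter p q t` means t ∈ p ||| q. -/
inductive Inter : List σ → List σ → List σ → Prop
  | nil : Inter [] [] []
  | left {p q t : List σ} {a : σ} : Inter p q t → Inter (a :: p) q (a :: t)
  | right {p q t : List σ} {a : σ} : Inter p q t → Inter p (a :: q) (a :: t)

/-- Trace parallel composition: interleaving of the normal parts followed by
    synchronisation of terminal events. -/
def tpar (p q : Trace σ) : Set (Trace σ) :=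
  {t | Inter p.1 q.1 t.1 ∧ Sync p.2 q.2 t.2}

/-- Denotational trace semantics of standard processes. -/
def T : Proc σ → Set (Trace σ)
  | .zero => ∅
  | .atom a => {([a], .tick)}
  | .skip => {([], .tick)}
  | .throw => {([], .bang)}
  | .yield => {([], .quest), ([], .tick)}
  | .seq P Q => {t | ∃ p ∈ T P, ∃ q ∈ T Q, t = tseq p q}
  | .choice P Q => T P ∪ T Q
  | .par P Q => {t | ∃ p ∈ T P, ∃ q ∈ T Q, t ∈ tpar p q}

/-- P is a process term of the language (built from atoms, SKIP, THROW, YIELD,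
    sequential composition, choice and parallel composition; not 0). -/
def IsTerm : Proc σ → Prop
  | .zero => False
  | .atom _ => True
  | .skip => True
  | .throw => True
  | .yield => True
  | .seq P Q => IsTerm P ∧ IsTerm Q
  | .choice P Q => IsTerm P ∧ IsTerm Q
  | .par P Q => IsTerm P ∧ IsTerm Q

/-- Compensable cCSP process terms (including the auxiliary construct ⟨QQ, P⟩). -/
inductive CProc (σ : Type) : Type
  | pair (P Q : Proc σ)
  | cseq (PP QQ : CProc σ)
  | cchoice (PP QQ : CProc σ)
  | cpar (PP QQ : CProc σ)
  | aux (QQ : CProc σ) (P : Proc σ)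

/-- Terminal transitions of compensable processes: PP —ω→ P, where the
    standard process P is the stored compensation. -/
inductive CStepT : CProc σ → Omega → Proc σ → Prop
  | pairT {P Q : Proc σ} :
      Step P (Ev.term .tick) Proc.zero → CStepT (.pair P Q) .tick Q
  | pairA {P Q : Proc σ} {ω : Omega} :
      Step P (Ev.term ω) Proc.zero → ω ≠ .tick → CStepT (.pair P Q) ω Proc.skip
  | cseqT {PP QQ : CProc σ} {P Q : Proc σ} {ω : Omega} :
      CStepT PP .tick P → CStepT QQ ω Q → CStepT (.cseq PP QQ) ω (Proc.seq Q P)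
  | cseqA {PP QQ : CProc σ} {P : Proc σ} {ω : Omega} :
      CStepT PP ω P → ω ≠ .tick → CStepT (.cseq PP QQ) ω P
  | auxT {QQ : CProc σ} {P Q : Proc σ} {ω : Omega} :
      CStepT QQ ω Q → CStepT (.aux QQ P) ω (Proc.seq Q P)
  | cchL {PP QQ : CProc σ} {P : Proc σ} {ω : Omega} :
      CStepT PP ω P → CStepT (.cchoice PP QQ) ω P
  | cchR {PP QQ : CProc σ} {Q : Proc σ} {ω : Omega} :
      CStepT QQ ω Q → CStepT (.cchoice PP QQ) ω Q
  | cparT {PP QQ : CProc σ} {P Q : Proc σ} {ω₁ ω₂ ω : Omega} :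
      CStepT PP ω₁ P → CStepT QQ ω₂ Q → Sync ω₁ ω₂ ω →
      CStepT (.cpar PP QQ) ω (Proc.par P Q)

/-- Normal transitions of compensable processes: PP —a→ PP'. -/
inductive CStepN : CProc σ → σ → CProc σ → Prop
  | pairN {P P' Q : Proc σ} {a : σ} :
      Step P (Ev.norm a) P' → CStepN (.pair P Q) a (.pair P' Q)
  | cseqN {PP PP' QQ : CProc σ} {a : σ} :
      CStepN PP a PP' → CStepN (.cseq PP QQ) a (.cseq PP' QQ)
  | cseqS {PP QQ QQ' : CProc σ} {P : Proc σ} {a : σ} :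
      CStepT PP .tick P → CStepN QQ a QQ' → CStepN (.cseq PP QQ) a (.aux QQ' P)
  | auxN {QQ QQ' : CProc σ} {P : Proc σ} {a : σ} :
      CStepN QQ a QQ' → CStepN (.aux QQ P) a (.aux QQ' P)
  | cchL {PP QQ RR : CProc σ} {a : σ} :
      CStepN PP a RR → CStepN (.cchoice PP QQ) a RR
  | cchR {PP QQ RR : CProc σ} {a : σ} :
      CStepN QQ a RR → CStepN (.cchoice PP QQ) a RR
  | cparL {PP PP' QQ : CProc σ} {a : σ} :
      CStepN PP a PP' → CStepN (.cpar PP QQ) a (.cpar PP' QQ)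
  | cparR {PP QQ QQ' : CProc σ} {a : σ} :
      CStepN QQ a QQ' → CStepN (.cpar PP QQ) a (.cpar PP QQ')

/-- Lifted forward transition relation of compensable processes. -/
def CLift : CProc σ → List σ → Omega → Proc σ → Prop
  | PP, [], ω, P => CStepT PP ω P
  | PP, a :: t, ω, P => ∃ PP', CStepN PP a PP' ∧ CLift PP' t ω P

/-- Lifted forward transition relation over complete traces. -/
def CLiftT (PP : CProc σ) (t : Trace σ) (P : Proc σ) : Prop := CLift PP t.1 t.2 P

/-- Derived traces of a compensable process: pairs of a forward trace and a
    compensation trace. -/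
def CDT (PP : CProc σ) : Set (Trace σ × Trace σ) :=
  {tt | ∃ R, CLiftT PP tt.1 R ∧ LiftT R tt.2 Proc.zero}

/-- PP does not contain the auxiliary construct ⟨QQ, P⟩. -/
def NoAux : CProc σ → Prop
  | .pair _ _ => True
  | .cseq PP QQ => NoAux PP ∧ NoAux QQ
  | .cchoice PP QQ => NoAux PP ∧ NoAux QQ
  | .cpar PP QQ => NoAux PP ∧ NoAux QQ
  | .aux _ _ => False

/-- Trace semantics of a compensation pair: p ÷ q. -/
def tpair (p q : Trace σ) : Trace σ × Trace σ :=
  if p.2 = Omega.tick then (p, q) else (p, ([], Omega.tick))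

/-- Denotational trace semantics of compensable processes
    (pairs of forward and compensation traces). -/
def CT : CProc σ → Set (Trace σ × Trace σ)
  | .pair P Q => {tt | ∃ p ∈ T P,
      (p.2 = Omega.tick ∧ ∃ q ∈ T Q, tt = (p, q)) ∨
      (p.2 ≠ Omega.tick ∧ tt = (p, ([], Omega.tick)))}
  | .cseq PP QQ => {tt | ∃ pp ∈ CT PP,
      (pp.1.2 = Omega.tick ∧
        ∃ qq ∈ CT QQ, tt = (tseq pp.1 qq.1, tseq qq.2 pp.2)) ∨
      (pp.1.2 ≠ Omega.tick ∧ tt = pp)}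
  | .cchoice PP QQ => CT PP ∪ CT QQ
  | .cpar PP QQ => {tt | ∃ pp ∈ CT PP, ∃ qq ∈ CT QQ,
      tt.1 ∈ tpar pp.1 qq.1 ∧ tt.2 ∈ tpar pp.2 qq.2}
  | .aux _ _ => ∅


lemma cpar_lift_fwd {σ : Type} : ∀ (l : List σ) (ω : Omega) (PP QQ : CProc σ) (R : Proc σ),
    CLift (CProc.cpar PP QQ) l ω R →
    ∃ (P Q : Proc σ) (pl ql : List σ) (ω₁ ω₂ : Omega),
      Inter pl ql l ∧ Sync ω₁ ω₂ ω ∧ CLift PP pl ω₁ P ∧ CLift QQ ql ω₂ Q ∧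
      R = Proc.par P Q := by
  intro l
  induction l with
  | nil =>
    intro ω PP QQ R h
    cases h with
    | cparT h1 h2 hs =>
      exact ⟨_, _, [], [], _, _, Inter.nil, hs, h1, h2, rfl⟩
  | cons a l ih =>
    intro ω PP QQ R h
    obtain ⟨RR', hstep, hrest⟩ := h
    cases hstep with
    | cparL h1 =>
      obtain ⟨P, Q, pl, ql, ω₁, ω₂, hi, hs, hp, hq, hr⟩ := ih ω _ _ R hrest
      exact ⟨P, Q, a :: pl, ql, ω₁, ω₂, Inter.left hi, hs, ⟨_, h1, hp⟩, hq, hr⟩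
    | cparR h1 =>
      obtain ⟨P, Q, pl, ql, ω₁, ω₂, hi, hs, hp, hq, hr⟩ := ih ω _ _ R hrest
      exact ⟨P, Q, pl, a :: ql, ω₁, ω₂, Inter.right hi, hs, hp, ⟨_, h1, hq⟩, hr⟩

lemma cpar_lift_bwd {σ : Type} {pl ql l : List σ} (hi : Inter pl ql l) :
    ∀ {ω₁ ω₂ ω : Omega} {PP QQ : CProc σ} {P Q : Proc σ},
    Sync ω₁ ω₂ ω → CLift PP pl ω₁ P → CLift QQ ql ω₂ Q →
    CLift (CProc.cpar PP QQ) l ω (Proc.par P Q) := by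
  induction hi with
  | nil =>
    intro ω₁ ω₂ ω PP QQ P Q hs hp hq
    exact CStepT.cparT hp hq hs
  | left _ ih =>
    intro ω₁ ω₂ ω PP QQ P Q hs hp hq
    obtain ⟨PP', h1, h2⟩ := hp
    exact ⟨_, CStepN.cparL h1, ih hs h2 hq⟩
  | right _ ih =>
    intro ω₁ ω₂ ω PP QQ P Q hs hp hq
    obtain ⟨QQ', h1, h2⟩ := hq
    exact ⟨_, CStepN.cparR h1, ih hs hp h2⟩

/-- lifted forward behaviour of parallel composition of
    compensable processes. -/
theorem cpar_lift {σ : Type} (PP QQ : CProc σ) (t : Trace σ) (R : Proc σ) :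
    CLiftT (CProc.cpar PP QQ) t R ↔
      ∃ (P Q : Proc σ) (p q : Trace σ),
        t ∈ tpar p q ∧ CLiftT PP p P ∧ CLiftT QQ q Q ∧
        R = Proc.par P Q := by
  constructor
  · intro h
    obtain ⟨P, Q, pl, ql, ω₁, ω₂, hi, hs, hp, hq, hr⟩ := cpar_lift_fwd t.1 t.2 PP QQ R h
    exact ⟨P, Q, (pl, ω₁), (ql, ω₂), ⟨hi, hs⟩, hp, hq, hr⟩
  · rintro ⟨P, Q, p, q, ⟨hi, hs⟩, hp, hq, rfl⟩
    exact cpar_lift_bwd hi hs hp hq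
end CCSP
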